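/- Let p : ℝ^n → [1,∞] be measurable, and suppose there exists C₀ > 0 such that ‖T_F f‖_{p(·)} ≤ C₀‖f‖_{p(·)} for every family F of pairwise disjoint cubes and every f ∈ L^{p(·)}. Then for every λ ∈ (0,1), every family F of pairwise disjoint cubes, every nonnegative family (t_Q)_{Q∈F}, and every choice of measurable sets E_Q ⊆ Q with |E_Q| ≥ λ|Q| (Q ∈ F), one has ‖∑_{Q∈F} t_Q χ_Q‖_{p(·)} ≤ (C₀/λ) ‖∑_{Q∈F} t_Q χ_{E_Q}‖_{p(·)}. In particular, condition 𝒜 implies that p(·) satisfies the A_∞ condition. -/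

import Mathlib

open MeasureTheory ENNReal Set

noncomputable section

/-- An axis-parallel cube in `ℝⁿ`, given by its center and (positive) side length. -/
structure RCube (n : ℕ) where
  center : Fin n → ℝ
  side : ℝ
  side_pos : 0 < side

namespace RCube

/-- The (closed) cube as a subset of `ℝⁿ`. -/
def toSet {n : ℕ} (Q : RCube n) : Set (Fin n → ℝ) :=
  {x | ∀ i, |x i - Q.center i| ≤ Q.side / 2}

/-- `rQ`: the cube concentric with `Q` whose side length is `r` times that of `Q`. -/
def scaledSet {n : ℕ} (Q : RCube n) (r : ℝ) : Set (Fin n → ℝ) :=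
  {x | ∀ i, |x i - Q.center i| ≤ r * Q.side / 2}

end RCube

/-- A family of pairwise disjoint cubes. -/
def PairwiseDisjointCubes {n : ℕ} (F : Set (RCube n)) : Prop :=
  F.Pairwise fun Q₁ Q₂ => Disjoint Q₁.toSet Q₂.toSet

/-- The variable Lebesgue norm `‖f‖_{p(·)}` for a real-valued (finite) exponent,
applied to an `ℝ≥0∞`-valued function: `inf {λ > 0 : ∫ (f/λ)^{p(x)} dx ≤ 1}`. -/
def vnorm {n : ℕ} (p : (Fin n → ℝ) → ℝ) (f : (Fin n → ℝ) → ℝ≥0∞) : ℝ≥0∞ :=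
  sInf {lam : ℝ≥0∞ | 0 < lam ∧ (∫⁻ x, (f x / lam) ^ p x) ≤ 1}

/-- `t^e` for `t, e ∈ [0,∞]`, with the standard variable-exponent convention
`t^∞ = 0` for `t ≤ 1` and `t^∞ = ∞` for `t > 1`. -/
def epow (t e : ℝ≥0∞) : ℝ≥0∞ :=
  if e = ∞ then (if t ≤ 1 then 0 else ∞) else t ^ e.toReal

/-- The variable Lebesgue norm for an exponent with values in `[1,∞]`. -/
def vnormE {n : ℕ} (p : (Fin n → ℝ) → ℝ≥0∞) (f : (Fin n → ℝ) → ℝ≥0∞) : ℝ≥0∞ :=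
  sInf {lam : ℝ≥0∞ | 0 < lam ∧ (∫⁻ x, epow (f x / lam) (p x)) ≤ 1}

/-- `|f|` as an `ℝ≥0∞`-valued function. -/
def ofR {n : ℕ} (f : (Fin n → ℝ) → ℝ) : (Fin n → ℝ) → ℝ≥0∞ :=
  fun x => ENNReal.ofReal |f x|

/-- The `ℝ≥0∞`-valued characteristic function of a set. -/
def chiE {n : ℕ} (S : Set (Fin n → ℝ)) : (Fin n → ℝ) → ℝ≥0∞ :=
  S.indicator fun _ => 1

/-- The Hardy--Littlewood maximal operator (over axis-parallel cubes containing `x`). -/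
def hlMaximal {n : ℕ} (f : (Fin n → ℝ) → ℝ) (x : Fin n → ℝ) : ℝ≥0∞ :=
  ⨆ (Q : RCube n) (_ : x ∈ Q.toSet),
    (∫⁻ y in Q.toSet, ENNReal.ofReal |f y|) / volume Q.toSet

/-- `M` is bounded on `L^{p(·)}`: there is `C > 0` with `‖Mf‖_{p(·)} ≤ C ‖f‖_{p(·)}`
for every `f ∈ L^{p(·)}`. -/
def MaximalBounded {n : ℕ} (p : (Fin n → ℝ) → ℝ) : Prop :=
  ∃ C > (0 : ℝ), ∀ f : (Fin n → ℝ) → ℝ, Measurable f → vnorm p (ofR f) < ∞ →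
    vnorm p (hlMaximal f) ≤ ENNReal.ofReal C * vnorm p (ofR f)

/-- The function `∑_{Q ∈ F} t_Q χ_{E_Q}` (for a pairwise disjoint family,
written as a pointwise supremum). -/
def cubeSum {n : ℕ} (F : Set (RCube n)) (t : RCube n → ℝ)
    (E : RCube n → Set (Fin n → ℝ)) (x : Fin n → ℝ) : ℝ≥0∞ :=
  ⨆ (Q : RCube n) (_ : Q ∈ F) (_ : x ∈ E Q), ENNReal.ofReal (t Q)

/-- `p(·)` satisfies the `A_∞` condition with parameter `lam` and constant `C`. -/
def AInftyWith {n : ℕ} (p : (Fin n → ℝ) → ℝ) (lam C : ℝ) : Prop :=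
  ∀ F : Set (RCube n), PairwiseDisjointCubes F →
    ∀ t : RCube n → ℝ, (∀ Q ∈ F, 0 ≤ t Q) →
      ∀ E : RCube n → Set (Fin n → ℝ),
        (∀ Q ∈ F, MeasurableSet (E Q) ∧ E Q ⊆ Q.toSet ∧
          ENNReal.ofReal lam * volume Q.toSet ≤ volume (E Q)) →
        vnorm p (cubeSum F t RCube.toSet) ≤ ENNReal.ofReal C * vnorm p (cubeSum F t E)

/-- The `A_∞` condition for a real-valued exponent. -/
def AInfty {n : ℕ} (p : (Fin n → ℝ) → ℝ) : Prop :=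
  ∃ lam ∈ Ioo (0 : ℝ) 1, ∃ C > (0 : ℝ), AInftyWith p lam C

/-- `p(·)` satisfies the `A_∞` condition with parameter `lam` and constant `C`
(exponent with values in `[1,∞]`). -/
def AInftyWithE {n : ℕ} (p : (Fin n → ℝ) → ℝ≥0∞) (lam C : ℝ) : Prop :=
  ∀ F : Set (RCube n), PairwiseDisjointCubes F →
    ∀ t : RCube n → ℝ, (∀ Q ∈ F, 0 ≤ t Q) →
      ∀ E : RCube n → Set (Fin n → ℝ),
        (∀ Q ∈ F, MeasurableSet (E Q) ∧ E Q ⊆ Q.toSet ∧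
          ENNReal.ofReal lam * volume Q.toSet ≤ volume (E Q)) →
        vnormE p (cubeSum F t RCube.toSet) ≤ ENNReal.ofReal C * vnormE p (cubeSum F t E)

/-- The `A_∞` condition for an exponent with values in `[1,∞]`. -/
def AInftyE {n : ℕ} (p : (Fin n → ℝ) → ℝ≥0∞) : Prop :=
  ∃ lam ∈ Ioo (0 : ℝ) 1, ∃ C > (0 : ℝ), AInftyWithE p lam C

/-- The nonincreasing-rearrangement value `(f χ_Q)^*(s) = inf {α : |{x ∈ Q : |f x| > α}| ≤ s}`. -/
def rearr {n : ℕ} (f : (Fin n → ℝ) → ℝ) (Q : RCube n) (s : ℝ≥0∞) : ℝ≥0∞ :=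
  sInf {a : ℝ≥0∞ | volume {x | x ∈ Q.toSet ∧ a < ENNReal.ofReal |f x|} ≤ s}

/-- The `λ`-median maximal operator `m_λ`. -/
def medianMax {n : ℕ} (lam : ℝ) (f : (Fin n → ℝ) → ℝ) (x : Fin n → ℝ) : ℝ≥0∞ :=
  ⨆ (Q : RCube n) (_ : x ∈ Q.toSet), rearr f Q (ENNReal.ofReal lam * volume Q.toSet)

/-- The modified median maximal operator `m_{τ,r}` (supremum over cubes `Q` with `x ∈ rQ`). -/
def medianMaxR {n : ℕ} (tau r : ℝ) (f : (Fin n → ℝ) → ℝ) (x : Fin n → ℝ) : ℝ≥0∞ :=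
  ⨆ (Q : RCube n) (_ : x ∈ Q.scaledSet r), rearr f Q (ENNReal.ofReal tau * volume Q.toSet)

/-- The average `⟨f⟩_Q = (1/|Q|) ∫_Q f`. -/
def cubeAvg {n : ℕ} (f : (Fin n → ℝ) → ℝ) (Q : RCube n) : ℝ :=
  (∫ y in Q.toSet, f y) / (volume Q.toSet).toReal

/-- `|T_F f|` for a pairwise disjoint family `F`, written as a pointwise supremum. -/
def avgSum {n : ℕ} (F : Set (RCube n)) (f : (Fin n → ℝ) → ℝ) (x : Fin n → ℝ) : ℝ≥0∞ :=
  ⨆ (Q : RCube n) (_ : Q ∈ F) (_ : x ∈ Q.toSet), ENNReal.ofReal |cubeAvg f Q|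

/-- The reverse Hölder condition `RH`. -/
def RHCond {n : ℕ} (p : (Fin n → ℝ) → ℝ) : Prop :=
  ∃ r : ℝ, 1 < r ∧ ∃ C : ℝ, 0 < C ∧
    ∀ S : Set (RCube n), PairwiseDisjointCubes S →
      ∀ t : RCube n → ℝ, (∀ Q ∈ S, 0 ≤ t Q) →
        (∑' Q : S, ∫⁻ x in Q.1.toSet, ENNReal.ofReal (t Q.1) ^ p x) ≤ 1 →
        (∑' Q : S, volume Q.1.toSet *
            ((∫⁻ x in Q.1.toSet, ENNReal.ofReal (t Q.1) ^ (r * p x)) / volume Q.1.toSet)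
              ^ (1 / r)) ≤ ENNReal.ofReal C


section AuxAInfty

variable {n : ℕ}

lemma RCube.toSet_eq_pi (Q : RCube n) :
    Q.toSet = Set.pi Set.univ
      (fun i => Set.Icc (Q.center i - Q.side / 2) (Q.center i + Q.side / 2)) := by
  ext x
  simp only [RCube.toSet, Set.mem_setOf_eq, Set.mem_pi, Set.mem_univ, forall_true_left,
    Set.mem_Icc, abs_le]
  constructor
  · intro h i
    have := h i
    constructor <;> linarith [this.1, this.2]
  · intro h i
    constructor <;> linarith [(h i).1, (h i).2]

lemma RCube.volume_toSet (Q : RCube n) :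
    volume Q.toSet = ENNReal.ofReal Q.side ^ n := by
  have h : ∀ i : Fin n, (Q.center i + Q.side / 2) - (Q.center i - Q.side / 2) = Q.side := by
    intro i; ring
  rw [Q.toSet_eq_pi, volume_pi_pi]
  simp [Real.volume_Icc, h]

lemma RCube.volume_toSet_pos (Q : RCube n) : 0 < volume Q.toSet := by
  rw [Q.volume_toSet]
  exact ENNReal.pow_pos (ENNReal.ofReal_pos.mpr Q.side_pos) n

lemma RCube.volume_toSet_lt_top (Q : RCube n) : volume Q.toSet < ∞ := by
  rw [Q.volume_toSet]
  exact ENNReal.pow_lt_top ENNReal.ofReal_lt_top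

lemma RCube.measurableSet_toSet (Q : RCube n) : MeasurableSet Q.toSet := by
  rw [Q.toSet_eq_pi]
  exact MeasurableSet.univ_pi fun i => measurableSet_Icc

lemma RCube.center_mem_interior (Q : RCube n) : Q.center ∈ interior Q.toSet := by
  have hsub : {x : Fin n → ℝ | ∀ i, |x i - Q.center i| < Q.side / 2} ⊆ Q.toSet :=
    fun x hx i => (hx i).le
  have hopen : IsOpen {x : Fin n → ℝ | ∀ i, |x i - Q.center i| < Q.side / 2} := by
    have hrw : {x : Fin n → ℝ | ∀ i, |x i - Q.center i| < Q.side / 2}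
        = ⋂ i, {x : Fin n → ℝ | |x i - Q.center i| < Q.side / 2} := by
      ext x; simp
    rw [hrw]
    refine isOpen_iInter_of_finite fun i => ?_
    have hc : Continuous fun x : Fin n → ℝ => |x i - Q.center i| :=
      ((continuous_apply i).sub continuous_const).abs
    exact isOpen_lt hc continuous_const
  have hc : Q.center ∈ {x : Fin n → ℝ | ∀ i, |x i - Q.center i| < Q.side / 2} := by
    intro i; simpa using half_pos Q.side_pos
  exact interior_maximal hsub hopen hc

lemma countable_of_pdc {F : Set (RCube n)} (hF : PairwiseDisjointCubes F) : F.Countable := by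
  have h : F.PairwiseDisjoint RCube.toSet := hF
  exact h.countable_of_nonempty_interior fun Q _ => ⟨Q.center, Q.center_mem_interior⟩

lemma unique_cube {F : Set (RCube n)} (hF : PairwiseDisjointCubes F) {Q Q' : RCube n}
    (hQ : Q ∈ F) (hQ' : Q' ∈ F) {x : Fin n → ℝ}
    (hx : x ∈ Q.toSet) (hx' : x ∈ Q'.toSet) : Q = Q' := by
  by_contra hne
  exact Set.disjoint_left.mp (hF hQ hQ' hne) hx hx'

lemma cubeSum_eq {F : Set (RCube n)} (hF : PairwiseDisjointCubes F) (t : RCube n → ℝ)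
    {E : RCube n → Set (Fin n → ℝ)} (hE : ∀ Q ∈ F, E Q ⊆ Q.toSet)
    {Q : RCube n} (hQ : Q ∈ F) {x : Fin n → ℝ} (hx : x ∈ E Q) :
    cubeSum F t E x = ENNReal.ofReal (t Q) := by
  refine le_antisymm ?_ ?_
  · refine iSup_le fun Q' => iSup_le fun hQ' => iSup_le fun hx' => ?_
    have h : Q' = Q := unique_cube hF hQ' hQ (hE Q' hQ' hx') (hE Q hQ hx)
    rw [h]
  · exact le_iSup_of_le Q (le_iSup_of_le hQ (le_iSup_of_le hx le_rfl))

lemma cubeSum_eq_zero {F : Set (RCube n)} (t : RCube n → ℝ)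
    {E : RCube n → Set (Fin n → ℝ)} {x : Fin n → ℝ}
    (h : ∀ Q ∈ F, x ∉ E Q) : cubeSum F t E x = 0 := by
  refine le_antisymm ?_ zero_le
  exact iSup_le fun Q => iSup_le fun hQ => iSup_le fun hx => absurd hx (h Q hQ)

lemma epow_mono {t t' e : ℝ≥0∞} (h : t ≤ t') : epow t e ≤ epow t' e := by
  unfold epow
  by_cases he : e = ∞
  · rw [if_pos he, if_pos he]
    by_cases h2 : t' ≤ 1
    · rw [if_pos (h.trans h2), if_pos h2]
    · rw [if_neg h2]
      exact le_top
  · rw [if_neg he, if_neg he]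
    exact ENNReal.rpow_le_rpow h ENNReal.toReal_nonneg

lemma vnormE_mono (p : (Fin n → ℝ) → ℝ≥0∞) {f g : (Fin n → ℝ) → ℝ≥0∞}
    (h : ∀ x, f x ≤ g x) : vnormE p f ≤ vnormE p g := by
  unfold vnormE
  apply sInf_le_sInf
  rintro lam ⟨hpos, hint⟩
  exact ⟨hpos, le_trans
    (lintegral_mono fun x => epow_mono (ENNReal.div_le_div_right (h x) lam)) hint⟩

lemma vnormE_le_inv_mul (p : (Fin n → ℝ) → ℝ≥0∞) (g : (Fin n → ℝ) → ℝ≥0∞)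
    {c : ℝ≥0∞} (hc0 : c ≠ 0) (hct : c ≠ ∞) :
    vnormE p g ≤ c⁻¹ * vnormE p (fun x => c * g x) := by
  have key : c * vnormE p g ≤ vnormE p (fun x => c * g x) := by
    unfold vnormE
    refine le_sInf ?_
    rintro lam ⟨hpos, hint⟩
    have hmem : c⁻¹ * lam ∈ {lam : ℝ≥0∞ | 0 < lam ∧ (∫⁻ x, epow (g x / lam) (p x)) ≤ 1} := by
      constructor
      · exact lt_of_le_of_ne zero_le (Ne.symm (mul_ne_zero (ENNReal.inv_ne_zero.mpr hct) hpos.ne'))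
      · have heq : ∀ x, g x / (c⁻¹ * lam) = c * g x / lam := by
          intro x
          rw [div_eq_mul_inv,
            ENNReal.mul_inv (Or.inl (ENNReal.inv_ne_zero.mpr hct))
              (Or.inl (ENNReal.inv_ne_top.mpr hc0)),
            inv_inv, div_eq_mul_inv, mul_comm c (g x), mul_assoc]
        simp only [heq]
        exact hint
    have h1 : sInf {lam : ℝ≥0∞ | 0 < lam ∧ (∫⁻ x, epow (g x / lam) (p x)) ≤ 1}
        ≤ c⁻¹ * lam := sInf_le hmem
    calc c * sInf {lam : ℝ≥0∞ | 0 < lam ∧ (∫⁻ x, epow (g x / lam) (p x)) ≤ 1}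
        ≤ c * (c⁻¹ * lam) := mul_le_mul_right h1 c
      _ = lam := by rw [← mul_assoc, ENNReal.mul_inv_cancel hc0 hct, one_mul]
  calc vnormE p g = c⁻¹ * (c * vnormE p g) := by
        rw [← mul_assoc, ENNReal.inv_mul_cancel hc0 hct, one_mul]
    _ ≤ c⁻¹ * vnormE p (fun x => c * g x) := mul_le_mul_right key _

end AuxAInfty

theorem statement1 {n : ℕ} (p : (Fin n → ℝ) → ℝ≥0∞) (hpm : Measurable p)
    (hp1 : ∀ x, 1 ≤ p x) (C₀ : ℝ) (hC₀ : 0 < C₀)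
    (hbound : ∀ F : Set (RCube n), PairwiseDisjointCubes F →
      ∀ f : (Fin n → ℝ) → ℝ, Measurable f → vnormE p (ofR f) < ∞ →
        vnormE p (avgSum F f) ≤ ENNReal.ofReal C₀ * vnormE p (ofR f)) :
    (∀ lam ∈ Ioo (0 : ℝ) 1, AInftyWithE p lam (C₀ / lam)) ∧ AInftyE p := by
  have main : ∀ lam ∈ Ioo (0:ℝ) 1, AInftyWithE p lam (C₀ / lam) := by
    rintro lam ⟨hl0, hl1⟩
    intro F hF t ht E hE
    have hFc : F.Countable := countable_of_pdc hF
    have hEsub : ∀ Q ∈ F, E Q ⊆ Q.toSet := fun Q hQ => (hE Q hQ).2.1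
    set f : (Fin n → ℝ) → ℝ := fun x => (cubeSum F t E x).toReal with hf
    have hcsmeas : Measurable (cubeSum F t E) := by
      have hrw : cubeSum F t E
          = fun x => ⨆ Q : F, (E Q.1).indicator (fun _ => ENNReal.ofReal (t Q.1)) x := by
        funext x
        rw [cubeSum, iSup_subtype']
        congr 1
        funext Q
        by_cases hx : x ∈ E Q.1
        · simp [hx]
        · simp [hx]
      rw [hrw]
      haveI := hFc.to_subtype
      exact Measurable.iSup fun Q => measurable_const.indicator (hE Q.1 Q.2).1
    have hfm : Measurable f := hcsmeas.ennreal_toReal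
    have hofR : ofR f = cubeSum F t E := by
      funext x
      by_cases h : ∃ Q ∈ F, x ∈ E Q
      · obtain ⟨Q, hQ, hx⟩ := h
        have h1 : cubeSum F t E x = ENNReal.ofReal (t Q) := cubeSum_eq hF t hEsub hQ hx
        show ENNReal.ofReal |(cubeSum F t E x).toReal| = cubeSum F t E x
        rw [h1, ENNReal.toReal_ofReal (ht Q hQ), abs_of_nonneg (ht Q hQ)]
      · push_neg at h
        have h1 : cubeSum F t E x = 0 := cubeSum_eq_zero t h
        show ENNReal.ofReal |(cubeSum F t E x).toReal| = cubeSum F t E x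
        rw [h1]
        simp
    have havg : ∀ Q ∈ F, lam * t Q ≤ |cubeAvg f Q| := by
      intro Q hQ
      have hEQ := hE Q hQ
      have hvolE_le : volume (E Q) ≤ volume Q.toSet := measure_mono hEQ.2.1
      have hvolQ_top : volume Q.toSet ≠ ∞ := Q.volume_toSet_lt_top.ne
      have hvolE_top : volume (E Q) ≠ ∞ := (lt_of_le_of_lt hvolE_le Q.volume_toSet_lt_top).ne
      have hfeq : Set.EqOn f ((E Q).indicator fun _ => t Q) Q.toSet := by
        intro y hy
        by_cases hyE : y ∈ E Q
        · have h1 : cubeSum F t E y = ENNReal.ofReal (t Q) := cubeSum_eq hF t hEsub hQ hyE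
          simp [hf, h1, Set.indicator_of_mem hyE, ENNReal.toReal_ofReal (ht Q hQ)]
        · have hnone : ∀ Q' ∈ F, y ∉ E Q' := by
            intro Q' hQ' hyE'
            have hqq : Q' = Q := unique_cube hF hQ' hQ (hEsub Q' hQ' hyE') hy
            exact hyE (hqq ▸ hyE')
          have h1 : cubeSum F t E y = 0 := cubeSum_eq_zero t hnone
          simp [hf, h1, Set.indicator_of_notMem hyE]
      have hint : (∫ y in Q.toSet, f y) = (volume (E Q)).toReal * t Q := by
        rw [setIntegral_congr_fun Q.measurableSet_toSet hfeq,
          setIntegral_indicator hEQ.1,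
          Set.inter_eq_self_of_subset_right hEQ.2.1,
          setIntegral_const, smul_eq_mul, measureReal_def]
      have hvolQ_pos : 0 < (volume Q.toSet).toReal :=
        ENNReal.toReal_pos Q.volume_toSet_pos.ne' hvolQ_top
      have hle : lam * (volume Q.toSet).toReal ≤ (volume (E Q)).toReal := by
        have h2 : (ENNReal.ofReal lam * volume Q.toSet).toReal ≤ (volume (E Q)).toReal :=
          ENNReal.toReal_mono hvolE_top hEQ.2.2
        rwa [ENNReal.toReal_mul, ENNReal.toReal_ofReal hl0.le] at h2
      have hca : lam * t Q ≤ cubeAvg f Q := by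
        rw [cubeAvg, hint, le_div_iff₀ hvolQ_pos]
        calc lam * t Q * (volume Q.toSet).toReal
            = (lam * (volume Q.toSet).toReal) * t Q := by ring
          _ ≤ (volume (E Q)).toReal * t Q := mul_le_mul_of_nonneg_right hle (ht Q hQ)
      exact hca.trans (le_abs_self _)
    have hpt : ∀ x, ENNReal.ofReal lam * cubeSum F t RCube.toSet x ≤ avgSum F f x := by
      intro x
      rw [cubeSum, ENNReal.mul_iSup]
      refine iSup_le fun Q => ?_
      rw [ENNReal.mul_iSup]
      refine iSup_le fun hQ => ?_
      rw [ENNReal.mul_iSup]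
      refine iSup_le fun hx => ?_
      calc ENNReal.ofReal lam * ENNReal.ofReal (t Q)
          = ENNReal.ofReal (lam * t Q) := (ENNReal.ofReal_mul hl0.le).symm
        _ ≤ ENNReal.ofReal |cubeAvg f Q| := ENNReal.ofReal_le_ofReal (havg Q hQ)
        _ ≤ avgSum F f x := le_iSup_of_le Q (le_iSup_of_le hQ (le_iSup_of_le hx le_rfl))
    by_cases hfin : vnormE p (cubeSum F t E) < ∞
    · have hb := hbound F hF f hfm (by rw [hofR]; exact hfin)
      rw [hofR] at hb
      have hc0 : (ENNReal.ofReal lam) ≠ 0 := (ENNReal.ofReal_pos.mpr hl0).ne'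
      have hct : (ENNReal.ofReal lam) ≠ ∞ := ENNReal.ofReal_ne_top
      calc vnormE p (cubeSum F t RCube.toSet)
          ≤ (ENNReal.ofReal lam)⁻¹
              * vnormE p (fun x => ENNReal.ofReal lam * cubeSum F t RCube.toSet x) :=
            vnormE_le_inv_mul p _ hc0 hct
        _ ≤ (ENNReal.ofReal lam)⁻¹ * vnormE p (avgSum F f) :=
            mul_le_mul_right (vnormE_mono p hpt) _
        _ ≤ (ENNReal.ofReal lam)⁻¹ * (ENNReal.ofReal C₀ * vnormE p (cubeSum F t E)) :=
            mul_le_mul_right hb _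
        _ = ENNReal.ofReal (C₀ / lam) * vnormE p (cubeSum F t E) := by
            rw [ENNReal.ofReal_div_of_pos hl0, ENNReal.div_eq_inv_mul, mul_assoc]
    · have htop : vnormE p (cubeSum F t E) = ∞ := by
        simpa using not_lt.mp hfin
      rw [htop, ENNReal.mul_top (ENNReal.ofReal_pos.mpr (div_pos hC₀ hl0)).ne']
      exact le_top
  refine ⟨main, ?_⟩
  exact ⟨1/2, ⟨by norm_num, by norm_num⟩, C₀ / (1/2), by positivity,
    main (1/2) ⟨by norm_num, by norm_num⟩⟩
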